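/- Baxter's dynamical R-matrix is dynamically P-symmetric: P R_Ba(z,ξ) P = R_Ba(z, −ξ + 2κ(h₁+h₂)) as operators on ℂ²⊗ℂ², where the right side acts on a weight vector of h₁+h₂-weight μ as R_Ba(z, −ξ+2κμ). -/

import Mathlib

/-- The renormalized Jacobi theta function `θ(x;q) = ∏_{j≥0} (1 - q^j x)(1 - q^{j+1} x⁻¹)`. -/
noncomputable def theta (q x : ℂ) : ℂ := ∏' j : ℕ, ((1 - q ^ j * x) * (1 - q ^ (j + 1) * x⁻¹))

/-- Operators on `ℂ² ⊗ ℂ²` as matrices indexed by pairs, in the ordered basis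
`(v₊⊗v₊, v₊⊗v₋, v₋⊗v₊, v₋⊗v₋)` where `0 ↔ +` and `1 ↔ -`. -/
abbrev Mat2 := Matrix (Fin 2 × Fin 2) (Fin 2 × Fin 2) ℂ

/-- Conjugation by the permutation operator `P` of the two tensor legs: `M ↦ P M P`. -/
def swapLegs (M : Mat2) : Mat2 :=
  Matrix.of fun p p' => M (p.2, p.1) (p'.2, p'.1)

/-- The matrix coefficient `A_Ba(z,ξ) = θ(q^{-z};q)θ(q^{2κ+ξ};q)/(θ(q^{2κ-z};q)θ(q^ξ;q))`. -/
noncomputable def ABa (q : ℝ) (κ z ξ : ℂ) : ℂ :=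
  theta (q : ℂ) ((q : ℂ) ^ (-z)) * theta (q : ℂ) ((q : ℂ) ^ (2 * κ + ξ)) /
    (theta (q : ℂ) ((q : ℂ) ^ (2 * κ - z)) * theta (q : ℂ) ((q : ℂ) ^ ξ))

/-- The matrix coefficient `B_Ba(z,ξ) = θ(q^{-z-ξ};q)θ(q^{2κ};q)/(θ(q^{2κ-z};q)θ(q^{-ξ};q))`. -/
noncomputable def BBa (q : ℝ) (κ z ξ : ℂ) : ℂ :=
  theta (q : ℂ) ((q : ℂ) ^ (-z - ξ)) * theta (q : ℂ) ((q : ℂ) ^ (2 * κ)) /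
    (theta (q : ℂ) ((q : ℂ) ^ (2 * κ - z)) * theta (q : ℂ) ((q : ℂ) ^ (-ξ)))

/-- Baxter's dynamical R-matrix
`R_Ba(z,ξ) = [[1,0,0,0],[0,A(z,ξ),B(z,ξ),0],[0,B(z,-ξ),A(z,-ξ),0],[0,0,0,1]]`. -/
noncomputable def RBa (q : ℝ) (κ z ξ : ℂ) : Mat2 :=
  Matrix.of fun p p' =>
    if p = ((0 : Fin 2), (0 : Fin 2)) ∧ p' = (0, 0) then 1
    else if p = ((1 : Fin 2), (1 : Fin 2)) ∧ p' = (1, 1) then 1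
    else if p = ((0 : Fin 2), (1 : Fin 2)) ∧ p' = (0, 1) then ABa q κ z ξ
    else if p = ((0 : Fin 2), (1 : Fin 2)) ∧ p' = (1, 0) then BBa q κ z ξ
    else if p = ((1 : Fin 2), (0 : Fin 2)) ∧ p' = (0, 1) then BBa q κ z (-ξ)
    else if p = ((1 : Fin 2), (0 : Fin 2)) ∧ p' = (1, 0) then ABa q κ z (-ξ)
    else 0

/-- The `h`-eigenvalue (weight) of the basis vector `v_ε` of `ℂ²`: `+1` for `0 ↔ +`, `-1` for `1 ↔ -`. -/
def sgn2 (a : Fin 2) : ℂ := if a = 0 then 1 else -1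


/-!
`P` fixes the weight `±2` vectors `v₊⊗v₊`, `v₋⊗v₋` and exchanges the two weight-zero vectors;
on the weight-zero block this swaps `A(ξ) ↔ A(-ξ)` and `B(ξ) ↔ B(-ξ)`, so `P R(ξ) P = R(-ξ)`.
The dynamical shift `2κμ` vanishes on that block, and on the weight `±2` vectors `R` is the
identity whatever the value of `ξ`.
-/

theorem swapLegs_RBa (q : ℝ) (κ z ξ : ℂ) : swapLegs (RBa q κ z ξ) = RBa q κ z (-ξ) := by
  ext ⟨a, b⟩ ⟨c, d⟩
  fin_cases a <;> fin_cases b <;> fin_cases c <;> fin_cases d <;>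
    simp [swapLegs, RBa, Prod.ext_iff]

theorem RBa_apply_add_mul_weight (q : ℝ) (κ z ξ c : ℂ) (p p' : Fin 2 × Fin 2) :
    RBa q κ z (ξ + c * (sgn2 p'.1 + sgn2 p'.2)) p p' = RBa q κ z ξ p p' := by
  obtain ⟨a, b⟩ := p
  obtain ⟨i, j⟩ := p'
  fin_cases a <;> fin_cases b <;> fin_cases i <;> fin_cases j <;>
    simp [RBa, sgn2, Prod.ext_iff]

theorem RBa_dynamically_P_symmetric_general (q : ℝ) (κ z ξ : ℂ) :
    swapLegs (RBa q κ z ξ) =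
    Matrix.of (fun p p' : Fin 2 × Fin 2 =>
      RBa q κ z (-ξ + 2 * κ * (sgn2 p'.1 + sgn2 p'.2)) p p') := by
  ext p p'
  rw [swapLegs_RBa, Matrix.of_apply, RBa_apply_add_mul_weight]

/-- Baxter's dynamical R-matrix is dynamically P-symmetric:
`P R_Ba(z,ξ) P = R_Ba(z, -ξ + 2κ(h₁+h₂))`, where the right-hand side acts on a weight vector
of `h₁+h₂`-weight `μ` as `R_Ba(z, -ξ+2κμ)`. -/
theorem RBa_dynamically_P_symmetric (q : ℝ) (hq : 0 < q) (hq1 : q < 1) (κ z ξ : ℂ) :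
    swapLegs (RBa q κ z ξ) =
    Matrix.of (fun p p' : Fin 2 × Fin 2 =>
      RBa q κ z (-ξ + 2 * κ * (sgn2 p'.1 + sgn2 p'.2)) p p') :=
  RBa_dynamically_P_symmetric_general q κ z ξ
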